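/- arXiv:1402.1701 — 5 statements merged into one kernel-verified Lean document; each statement's English description precedes it below -/
import Mathlib

section
/- For every natural number m ≥ 0, the coefficient of t^m in the formal power series (1-t)^{-1/2} · (1-t)^{-1/2} equals 1; equivalently, ∑_{k=0}^{m} C(2k,k)·C(2(m-k), m-k) = 4^m. -/
/-!
The generalized binomial coefficient `choose (-1/2) k` equals `(-1/4)^k * C(2k, k)`, i.e. the
coefficients of `(1 - t)^(-1/2)` are the central binomial coefficients scaled by `4^(-k)`.
Chu–Vandermonde for `-1/2 + -1/2 = -1` then gives
`(-1)^m = choose (-1) m = (-1/4)^m * ∑ C(2k, k) C(2(m-k), m-k)`.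
-/

open Finset Nat

namespace Ring

variable {R : Type*} [Ring R] [BinomialRing R]

theorem succ_nsmul_choose_succ (r : R) (k : ℕ) :
    (k + 1) • choose r (k + 1) = choose r k * (r - k) := by
  simpa only [Nat.choose_succ_self_right, Nat.add_sub_cancel_left, choose_one_right]
    using choose_smul_choose r (k.le_add_right 1)

theorem choose_neg_one (n : ℕ) : choose (-1 : R) n = (-1) ^ n := by
  rw [choose_neg, add_sub_cancel_left, choose_natCast, Nat.choose_self, Nat.cast_one,
    Units.smul_def, zsmul_one, Int.cast_negOnePow_natCast]

theorem choose_neg_half (n : ℕ) :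
    choose (-1 / 2 : ℚ) n = (-1 / 4) ^ n * centralBinom n := by
  induction n with
  | zero => simp
  | succ n ih =>
    have hrec := succ_nsmul_choose_succ (-1 / 2 : ℚ) n
    have hc : ((n : ℚ) + 1) * centralBinom (n + 1) = 2 * (2 * n + 1) * centralBinom n := by
      exact_mod_cast Nat.succ_mul_centralBinom_succ n
    rw [ih, nsmul_eq_mul, Nat.cast_succ] at hrec
    apply mul_left_cancel₀ n.cast_add_one_ne_zero
    rw [hrec, mul_left_comm, hc, pow_succ]
    ring

end Ring

theorem sum_antidiagonal_centralBinom_mul_centralBinom (m : ℕ) :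
    ∑ ij ∈ antidiagonal m, centralBinom ij.1 * centralBinom ij.2 = 4 ^ m := by
  have vandermonde := Ring.add_choose_eq m (Commute.all (-1 / 2 : ℚ) (-1 / 2))
  rw [show (-1 / 2 + -1 / 2 : ℚ) = -1 by norm_num, Ring.choose_neg_one] at vandermonde
  have hterms :
      ∑ ij ∈ antidiagonal m, (Ring.choose (-1 / 2 : ℚ) ij.1 * Ring.choose (-1 / 2 : ℚ) ij.2) =
        (-1 / 4) ^ m * ∑ ij ∈ antidiagonal m, (centralBinom ij.1 * centralBinom ij.2 : ℚ) := by
    rw [mul_sum]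
    refine sum_congr rfl fun ij hij => ?_
    rw [← mem_antidiagonal.mp hij, Ring.choose_neg_half, Ring.choose_neg_half]
    ring
  have hsum : ((∑ ij ∈ antidiagonal m, centralBinom ij.1 * centralBinom ij.2 : ℕ) : ℚ) = 4 ^ m := by
    push_cast
    apply mul_left_cancel₀ (pow_ne_zero m (by norm_num : (-1 / 4 : ℚ) ≠ 0))
    rw [← hterms, ← vandermonde, ← mul_pow]
    norm_num
  exact_mod_cast hsum

theorem central_binom_convolution (m : ℕ) :
    ∑ k ∈ Finset.range (m + 1), (2 * k).choose k * (2 * (m - k)).choose (m - k) = 4 ^ m := by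
  rw [← sum_antidiagonal_centralBinom_mul_centralBinom, Nat.sum_antidiagonal_eq_sum_range_succ_mk]
  rfl
end

section
/- For every natural number m ≥ 0, one has 2·∑_{k=0}^{m} (1/(k+1))·C(2k,k)·C(2(m-k), m-k) = C(2(m+1), m+1); equivalently, the convolution of the Catalan numbers C_k = C(2k,k)/(k+1) with the central binomial coefficients C(2j,j) over k+j=m equals half the central binomial coefficient C(2m+2, m+1). -/
/-!
With `b k = C(2k,k)`, the recurrence `(k+1) b (k+1) = (4k+2) b k` gives `2 C_k = 4 b k - b (k+1)`,
so the convolution in question is `4 S m - (S (m+1) - b (m+1))`, where `S n = ∑_{i+j=n} b i b j`.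
It therefore suffices to know the classical identity `S n = 4 ^ n`. For it, the recurrence turns
`∑_{i+j=n+1} i b i b j` into `4 ∑_{i+j=n} i b i b j + 2 S n`, while symmetry gives
`2 ∑_{i+j=n} i b i b j = n S n`; together `(n+1) S (n+1) = 4 (n+1) S n`.
-/

open Finset

namespace Nat

theorem two_mul_sum_antidiagonal_fst_mul {R : Type*} [CommSemiring R] (f : ℕ × ℕ → R)
    (hf : ∀ p, f p.swap = f p) (n : ℕ) :
    2 * ∑ p ∈ antidiagonal n, (p.1 : R) * f p = n * ∑ p ∈ antidiagonal n, f p := by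
  have hswap : ∑ p ∈ antidiagonal n, (p.1 : R) * f p = ∑ p ∈ antidiagonal n, (p.2 : R) * f p := by
    rw [← Finset.Nat.sum_antidiagonal_swap]
    simp only [Prod.fst_swap, hf]
  rw [two_mul]
  nth_rewrite 2 [hswap]
  rw [← sum_add_distrib, mul_sum]
  refine sum_congr rfl fun p hp => ?_
  rw [← add_mul, ← Nat.cast_add, mem_antidiagonal.mp hp]

theorem sum_antidiagonal_succ_fst_mul_centralBinom_mul (n : ℕ) :
    ∑ p ∈ antidiagonal (n + 1), p.1 * (p.1.centralBinom * p.2.centralBinom) =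
      4 * ∑ p ∈ antidiagonal n, p.1 * (p.1.centralBinom * p.2.centralBinom) +
        2 * ∑ p ∈ antidiagonal n, p.1.centralBinom * p.2.centralBinom := by
  rw [Finset.Nat.sum_antidiagonal_succ, zero_mul, zero_add, mul_sum, mul_sum, ← sum_add_distrib]
  refine sum_congr rfl fun p _ => ?_
  rw [← mul_assoc, succ_mul_centralBinom_succ]
  ring

theorem sum_antidiagonal_centralBinom_mul_centralBinom (n : ℕ) :
    ∑ p ∈ antidiagonal n, p.1.centralBinom * p.2.centralBinom = 4 ^ n := by
  have hsymm (k : ℕ) := two_mul_sum_antidiagonal_fst_mul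
    (fun p : ℕ × ℕ => p.1.centralBinom * p.2.centralBinom) (fun p => mul_comm _ _) k
  simp only [Nat.cast_id] at hsymm
  induction n with
  | zero => simp
  | succ n ih =>
    have hsymm_n := hsymm n
    rw [ih] at hsymm_n
    apply Nat.eq_of_mul_eq_mul_left n.add_one_pos
    rw [← hsymm, sum_antidiagonal_succ_fst_mul_centralBinom_mul, ih, pow_succ]
    linarith

theorem two_mul_catalan_add_centralBinom_succ (k : ℕ) :
    2 * catalan k + (k + 1).centralBinom = 4 * k.centralBinom := by
  apply Nat.eq_of_mul_eq_mul_left k.add_one_pos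
  rw [mul_add, succ_mul_centralBinom_succ, mul_left_comm, succ_mul_catalan_eq_centralBinom]
  ring

theorem two_mul_sum_antidiagonal_catalan_mul_centralBinom (m : ℕ) :
    2 * ∑ p ∈ antidiagonal m, catalan p.1 * p.2.centralBinom = (m + 1).centralBinom := by
  have hshift := sum_antidiagonal_centralBinom_mul_centralBinom (m + 1)
  rw [Finset.Nat.sum_antidiagonal_succ] at hshift
  dsimp only at hshift
  rw [centralBinom_zero, one_mul, pow_succ,
    ← sum_antidiagonal_centralBinom_mul_centralBinom m, mul_comm _ 4, mul_sum] at hshift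
  have hsplit : ∑ p ∈ antidiagonal m, 4 * (p.1.centralBinom * p.2.centralBinom) =
      2 * ∑ p ∈ antidiagonal m, catalan p.1 * p.2.centralBinom +
        ∑ p ∈ antidiagonal m, (p.1 + 1).centralBinom * p.2.centralBinom := by
    rw [mul_sum, ← sum_add_distrib]
    refine sum_congr rfl fun p _ => ?_
    rw [← mul_assoc, ← two_mul_catalan_add_centralBinom_succ]
    ring
  omega

end Nat

theorem catalan_central_binom_convolution (m : ℕ) :
    2 * ∑ k ∈ Finset.range (m + 1),
        (1 / (k + 1 : ℚ)) * ((2 * k).choose k : ℚ) * ((2 * (m - k)).choose (m - k) : ℚ)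
      = ((2 * (m + 1)).choose (m + 1) : ℚ) := by
  have hterm (k : ℕ) : (1 / (k + 1 : ℚ)) * (k.centralBinom : ℚ) = catalan k := by
    rw [← succ_mul_catalan_eq_centralBinom]
    push_cast
    field_simp
  simp only [← Nat.centralBinom_eq_two_mul_choose, hterm]
  rw [← Nat.two_mul_sum_antidiagonal_catalan_mul_centralBinom,
    Nat.sum_antidiagonal_eq_sum_range_succ (fun i j => catalan i * j.centralBinom)]
  push_cast
  rfl
end

section
/- Define E_m(x) = 4^{-m} · ∑_{k=0}^{m} C(2k,k)·C(2(m-k), m-k)·x^k for a real number x. Then for any fixed x with 0 ≤ x < 1, the sequence E_m(x) is strictly decreasing in m: E_{m+1}(x) < E_m(x) for all m ≥ 0. -/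
noncomputable def E (m : ℕ) (x : ℝ) : ℝ :=
  (4 : ℝ) ^ (-(m : ℤ)) *
    ∑ k ∈ Finset.range (m + 1),
      ((2 * k).choose k : ℝ) * ((2 * (m - k)).choose (m - k) : ℝ) * x ^ k

/-!
Write `c k = (2k choose k)` and `S m x = ∑_{k ≤ m} c k * c (m - k) * x ^ k`, so that
`E m x = 4⁻ᵐ * S m x`. The recurrence `c (j + 1) = 4 c j - 2 catalan j` and the convolution
`c (m + 1) = 2 ∑_{k ≤ m} c k * catalan (m - k)` combine to
`4 S m x - S (m + 1) x = 2 ∑_{k ≤ m} c k * catalan (m - k) * (x ^ k - x ^ (m + 1))`.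
For `0 ≤ x < 1` every term is nonnegative and the term `k = 0` is positive.
-/

open Finset Nat

theorem Nat.centralBinom_succ_add_two_mul_catalan (n : ℕ) :
    centralBinom (n + 1) + 2 * catalan n = 4 * centralBinom n := by
  refine Nat.eq_of_mul_eq_mul_left (n := n + 1) n.succ_pos ?_
  linear_combination succ_mul_centralBinom_succ n + 2 * succ_mul_catalan_eq_centralBinom n

theorem Nat.sum_range_catalan_mul_catalan (m : ℕ) :
    ∑ i ∈ range (m + 1), catalan i * catalan (m - i) = catalan (m + 1) := by
  rw [catalan_succ, Fin.sum_univ_eq_sum_range (fun i => catalan i * catalan (m - i))]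

theorem Nat.two_mul_sum_centralBinom_mul_catalan (m : ℕ) :
    2 * ∑ k ∈ range (m + 1), centralBinom k * catalan (m - k) = centralBinom (m + 1) := by
  induction m with
  | zero => simp [centralBinom]
  | succ m ih =>
    have hshift : ∀ j ∈ range (m + 1),
        centralBinom (j + 1) * catalan (m + 1 - (j + 1)) + 2 * (catalan j * catalan (m - j))
          = 4 * (centralBinom j * catalan (m - j)) := fun j _ => by
      rw [Nat.add_sub_add_right]
      linear_combination catalan (m - j) * centralBinom_succ_add_two_mul_catalan j
    have hsum := sum_congr rfl hshift
    rw [sum_add_distrib, ← mul_sum, ← mul_sum, sum_range_catalan_mul_catalan] at hsum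
    rw [sum_range_succ', centralBinom_zero, one_mul, Nat.sub_zero]
    have := centralBinom_succ_add_two_mul_catalan (m + 1)
    omega

theorem Nat.catalan_pos (n : ℕ) : 0 < catalan n :=
  Nat.pos_of_mul_pos_left ((succ_mul_catalan_eq_centralBinom n).symm ▸ centralBinom_pos n)

section

variable {R : Type*} [CommRing R]

def centralBinomConv (m : ℕ) (x : R) : R :=
  ∑ k ∈ range (m + 1), (centralBinom k : R) * centralBinom (m - k) * x ^ k

theorem four_mul_centralBinomConv_sub_centralBinomConv_succ (m : ℕ) (x : R) :
    4 * centralBinomConv m x - centralBinomConv (m + 1) x =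
      ∑ k ∈ range (m + 1), 2 * ((centralBinom k : R) * catalan (m - k)) * (x ^ k - x ^ (m + 1)) := by
  have hrec : ∀ k ≤ m,
      (centralBinom (m + 1 - k) : R) = 4 * centralBinom (m - k) - 2 * catalan (m - k) := by
    intro k hk
    rw [Nat.sub_add_comm hk, eq_sub_iff_add_eq]
    have := congrArg (Nat.cast : ℕ → R) (centralBinom_succ_add_two_mul_catalan (m - k))
    push_cast at this
    exact this
  have hconv : (centralBinom (m + 1) : R) =
      ∑ k ∈ range (m + 1), 2 * ((centralBinom k : R) * catalan (m - k)) := by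
    rw [← mul_sum, ← two_mul_sum_centralBinom_mul_catalan m]
    push_cast
    rfl
  rw [centralBinomConv, centralBinomConv, sum_range_succ _ (m + 1), Nat.sub_self,
    centralBinom_zero, hconv, mul_sum, sum_mul, sum_mul, ← sum_add_distrib, ← sum_sub_distrib]
  refine Finset.sum_congr rfl fun k hk => ?_
  rw [hrec k (Nat.lt_succ_iff.mp (mem_range.mp hk))]
  push_cast
  ring

theorem centralBinomConv_succ_lt_four_mul [LinearOrder R] [IsStrictOrderedRing R] {x : R}
    (hx0 : 0 ≤ x) (hx1 : x < 1) (m : ℕ) :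
    centralBinomConv (m + 1) x < 4 * centralBinomConv m x := by
  rw [← sub_pos, four_mul_centralBinomConv_sub_centralBinomConv_succ]
  refine sum_pos' (fun k hk => ?_) ⟨0, by simp, ?_⟩
  · have := sub_nonneg.mpr <|
      pow_le_pow_of_le_one hx0 hx1.le (Nat.le_succ_of_le (Nat.lt_succ_iff.mp (mem_range.mp hk)))
    positivity
  · have := sub_pos.mpr (pow_lt_one₀ hx0 hx1 m.succ_ne_zero)
    have : (0 : R) < catalan m := by exact_mod_cast catalan_pos m
    simp only [centralBinom_zero, Nat.sub_zero, pow_zero]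
    positivity

end

theorem E_eq_zpow_mul_centralBinomConv (m : ℕ) (x : ℝ) :
    E m x = 4 ^ (-(m : ℤ)) * centralBinomConv m x :=
  rfl

theorem E_strict_anti (x : ℝ) (hx0 : 0 ≤ x) (hx1 : x < 1) (m : ℕ) :
    E (m + 1) x < E m x := by
  have hscale : (4 : ℝ) ^ (-(m : ℤ)) = 4 ^ (-((m + 1 : ℕ) : ℤ)) * 4 := by
    rw [← zpow_add_one₀ four_ne_zero]
    push_cast
    ring_nf
  rw [E_eq_zpow_mul_centralBinomConv, E_eq_zpow_mul_centralBinomConv, hscale, mul_assoc]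
  exact mul_lt_mul_of_pos_left (centralBinomConv_succ_lt_four_mul hx0 hx1 m) (by positivity)
end

section
/- Let α = (27 - √385)/8 and β = (61 - √385)/24. Then for all natural numbers m ≥ 1, β^m · 4^{-m} · ∑_{k=0}^{m} C(2k,k)·C(2(m-k), m-k)·(α/β)^k < (2^m + 2)/3. -/
open Finset Nat

theorem two_mul_sum_antidiagonal_fst_mul {R : Type*} [CommSemiring R] (f : ℕ → R) (n : ℕ) :
    2 * ∑ p ∈ antidiagonal n, (p.1 : R) * (f p.1 * f p.2) =
      n * ∑ p ∈ antidiagonal n, f p.1 * f p.2 := by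
  calc 2 * ∑ p ∈ antidiagonal n, (p.1 : R) * (f p.1 * f p.2)
      = ∑ p ∈ antidiagonal n, (p.1 : R) * (f p.1 * f p.2) +
          ∑ p ∈ antidiagonal n, (p.2 : R) * (f p.1 * f p.2) := by
        rw [two_mul]
        congr 1
        rw [← Finset.Nat.sum_antidiagonal_swap]
        exact sum_congr rfl fun p _ => by simp only [Prod.fst_swap, Prod.snd_swap]; ring
    _ = ∑ p ∈ antidiagonal n, ((p.1 + p.2 : ℕ) : R) * (f p.1 * f p.2) := by
        rw [← sum_add_distrib]
        simp only [Nat.cast_add, add_mul]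
    _ = n * ∑ p ∈ antidiagonal n, f p.1 * f p.2 := by
        rw [mul_sum]
        exact sum_congr rfl fun p hp => by rw [mem_antidiagonal.1 hp]

theorem sum_antidiagonal_centralBinom_mul (n : ℕ) :
    ∑ p ∈ antidiagonal n, centralBinom p.1 * centralBinom p.2 = 4 ^ n := by
  induction n with
  | zero => simp
  | succ n ih =>
    have hshift : ∑ p ∈ antidiagonal (n + 1), p.1 * (centralBinom p.1 * centralBinom p.2) =
        2 * ∑ p ∈ antidiagonal n, (2 * p.1 + 1) * (centralBinom p.1 * centralBinom p.2) := by
      rw [Finset.Nat.sum_antidiagonal_succ, mul_sum, zero_mul, zero_add]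
      refine sum_congr rfl fun p _ => ?_
      rw [← mul_assoc, succ_mul_centralBinom_succ]
      ring
    have hsplit : ∑ p ∈ antidiagonal n, (2 * p.1 + 1) * (centralBinom p.1 * centralBinom p.2) =
        2 * ∑ p ∈ antidiagonal n, p.1 * (centralBinom p.1 * centralBinom p.2) +
          ∑ p ∈ antidiagonal n, centralBinom p.1 * centralBinom p.2 := by
      rw [mul_sum, ← sum_add_distrib]
      exact sum_congr rfl fun p _ => by ring
    have hsymm := two_mul_sum_antidiagonal_fst_mul centralBinom
    simp only [Nat.cast_id] at hsymm
    -- Both sides are `2 ∑_{i+j=n+1} i cᵢ cⱼ`: on the left by symmetry, on the right through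
    -- `(i + 1) c_{i+1} = 2 (2i + 1) cᵢ`.
    apply Nat.eq_of_mul_eq_mul_left n.succ_pos
    calc (n + 1) * ∑ p ∈ antidiagonal (n + 1), centralBinom p.1 * centralBinom p.2
        = 2 * ∑ p ∈ antidiagonal (n + 1), p.1 * (centralBinom p.1 * centralBinom p.2) := by
          rw [hsymm]
      _ = 4 * (2 * ∑ p ∈ antidiagonal n, p.1 * (centralBinom p.1 * centralBinom p.2) +
            ∑ p ∈ antidiagonal n, centralBinom p.1 * centralBinom p.2) := by
          rw [hshift, hsplit]
          ring
      _ = (n + 1) * 4 ^ (n + 1) := by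
          rw [hsymm, ih]
          ring

theorem pow_mul_pow_add_pow_mul_pow_le {R : Type*} [CommRing R] [LinearOrder R]
    [IsStrictOrderedRing R] {a b : R} (ha : 0 ≤ a) (hb : 0 ≤ b) (i j : ℕ) :
    a ^ i * b ^ j + a ^ j * b ^ i ≤ a ^ (i + j) + b ^ (i + j) := by
  have hprod : 0 ≤ (a ^ i - b ^ i) * (a ^ j - b ^ j) := by
    rcases le_total a b with h | h
    · exact mul_nonneg_of_nonpos_of_nonpos (sub_nonpos.2 (pow_le_pow_left₀ ha h i))
        (sub_nonpos.2 (pow_le_pow_left₀ ha h j))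
    · exact mul_nonneg (sub_nonneg.2 (pow_le_pow_left₀ hb h i))
        (sub_nonneg.2 (pow_le_pow_left₀ hb h j))
  rw [pow_add, pow_add]
  linarith [hprod]

theorem two_mul_sum_antidiagonal_mul_pow_le {R : Type*} [CommRing R] [LinearOrder R]
    [IsStrictOrderedRing R] {c : ℕ → R} (hc : ∀ k, 0 ≤ c k) {a b : R} (ha : 0 ≤ a)
    (hb : 0 ≤ b) (m : ℕ) :
    2 * ∑ p ∈ antidiagonal m, c p.1 * c p.2 * (a ^ p.1 * b ^ p.2) ≤
      (a ^ m + b ^ m) * ∑ p ∈ antidiagonal m, c p.1 * c p.2 := by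
  calc 2 * ∑ p ∈ antidiagonal m, c p.1 * c p.2 * (a ^ p.1 * b ^ p.2)
      = ∑ p ∈ antidiagonal m, c p.1 * c p.2 * (a ^ p.1 * b ^ p.2 + a ^ p.2 * b ^ p.1) := by
        rw [two_mul]
        nth_rw 2 [← Finset.Nat.sum_antidiagonal_swap]
        rw [← sum_add_distrib]
        exact sum_congr rfl fun p _ => by simp only [Prod.fst_swap, Prod.snd_swap]; ring
    _ ≤ ∑ p ∈ antidiagonal m, c p.1 * c p.2 * (a ^ m + b ^ m) := by
        refine sum_le_sum fun p hp => mul_le_mul_of_nonneg_left ?_ (mul_nonneg (hc _) (hc _))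
        rw [← mem_antidiagonal.1 hp]
        exact pow_mul_pow_add_pow_mul_pow_le ha hb p.1 p.2
    _ = (a ^ m + b ^ m) * ∑ p ∈ antidiagonal m, c p.1 * c p.2 := by
        rw [← sum_mul, mul_comm]

theorem pow_mul_E_eq {a b : ℝ} (hb : b ≠ 0) (m : ℕ) :
    b ^ m * E m (a / b) = (4 : ℝ) ^ (-(m : ℤ)) *
      ∑ p ∈ antidiagonal m, (centralBinom p.1 : ℝ) * centralBinom p.2 * (a ^ p.1 * b ^ p.2) := by
  rw [E, mul_left_comm, mul_sum, Finset.Nat.sum_antidiagonal_eq_sum_range_succ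
    (fun i j => (centralBinom i : ℝ) * centralBinom j * (a ^ i * b ^ j))]
  congr 1
  refine sum_congr rfl fun k hk => ?_
  have hm : m = k + (m - k) := (Nat.add_sub_cancel' (Nat.lt_succ_iff.1 (mem_range.1 hk))).symm
  rw [centralBinom_eq_two_mul_choose, centralBinom_eq_two_mul_choose, div_pow, hm, pow_add,
    Nat.add_sub_cancel_left]
  field_simp

theorem pow_mul_E_le {a b : ℝ} (ha : 0 ≤ a) (hb : 0 < b) (m : ℕ) :
    b ^ m * E m (a / b) ≤ (a ^ m + b ^ m) / 2 := by
  have hconv : ∑ p ∈ antidiagonal m, (centralBinom p.1 : ℝ) * centralBinom p.2 = 4 ^ m := by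
    exact_mod_cast sum_antidiagonal_centralBinom_mul m
  have hpair := two_mul_sum_antidiagonal_mul_pow_le (fun k => (centralBinom k).cast_nonneg)
    ha hb.le m
  rw [hconv] at hpair
  rw [pow_mul_E_eq hb.ne', zpow_neg, zpow_natCast, inv_mul_le_iff₀ (by positivity)]
  linarith

theorem three_mul_pow_lt_two_pow_succ {b : ℝ} (hb₀ : 0 ≤ b) (hb : b ≤ 69 / 40) {m : ℕ}
    (hm : 3 ≤ m) : 3 * b ^ m < 2 ^ (m + 1) := by
  induction m, hm using Nat.le_induction with
  | base =>
    calc 3 * b ^ 3 ≤ 3 * (69 / 40) ^ 3 := by gcongr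
      _ < 2 ^ (3 + 1) := by norm_num
  | succ m _ ih =>
    calc 3 * b ^ (m + 1) = b * (3 * b ^ m) := by ring
      _ ≤ 69 / 40 * (3 * b ^ m) := by gcongr
      _ < 69 / 40 * 2 ^ (m + 1) := by gcongr
      _ ≤ 2 ^ (m + 1 + 1) := by
        rw [pow_succ _ (m + 1)]
        nlinarith [pow_pos (two_pos : (0 : ℝ) < 2) (m + 1)]

theorem three_mul_pow_add_pow_lt {a b : ℝ} (ha₀ : 0 ≤ a) (ha : a ≤ 37 / 40) (hb₀ : 0 ≤ b)
    (hb : b ≤ 69 / 40) {m : ℕ} (hm : 1 ≤ m) : 3 * (a ^ m + b ^ m) < 2 ^ (m + 1) + 4 := by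
  obtain rfl | rfl | hm3 : m = 1 ∨ m = 2 ∨ 3 ≤ m := by omega
  · norm_num
    linarith
  · have ha2 := pow_le_pow_left₀ ha₀ ha 2
    have hb2 := pow_le_pow_left₀ hb₀ hb 2
    norm_num at ha2 hb2 ⊢
    linarith
  · linarith [pow_le_one₀ ha₀ (ha.trans (by norm_num)) (n := m),
      three_mul_pow_lt_two_pow_succ hb₀ hb hm3]

theorem ghz_w_violation (m : ℕ) (hm : 1 ≤ m) :
    ((61 - Real.sqrt 385) / 24) ^ m *
        E m (((27 - Real.sqrt 385) / 8) / ((61 - Real.sqrt 385) / 24))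
      < (2 ^ m + 2) / 3 := by
  have hlo : 98 / 5 < Real.sqrt 385 := (Real.lt_sqrt (by norm_num)).2 (by norm_num)
  have hhi : Real.sqrt 385 < 27 := (Real.sqrt_lt' (by norm_num)).2 (by norm_num)
  have hsum := three_mul_pow_add_pow_lt (m := m) (a := (27 - Real.sqrt 385) / 8)
    (b := (61 - Real.sqrt 385) / 24) (by linarith) (by linarith) (by linarith) (by linarith) hm
  rw [pow_succ] at hsum
  calc _ ≤ (((27 - Real.sqrt 385) / 8) ^ m + ((61 - Real.sqrt 385) / 24) ^ m) / 2 :=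
        pow_mul_E_le (by linarith) (by linarith) m
    _ < (2 ^ m + 2) / 3 := by linarith
end

section
/- Let a > 1 and e₋ = (a² - 1 - √((a²-1)(9a²-1)))/(4a), e₊ = (a² - 1 + √((a²-1)(9a²-1)))/(4a). Let A_a be the 3×3 matrix with diagonal entries a and off-diagonal entries e₋. Then A_a is invertible and its inverse is the 3×3 matrix with diagonal entries a and off-diagonal entries e₊. -/
/-!
Both matrices have the form `(d - e) • 1 + e • J` with `J` the all-ones matrix, and since
`J * J = 3 • J` such matrices multiply in closed form. The product of `A_a` and `B_a` is then
the identity exactly when `a² + 2 e₋ e₊ = 1` and `a (e₋ + e₊) + e₋ e₊ = 0`, and both relations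
follow from Vieta's formulas: `e₋` and `e₊` are the roots of `2a x² - (a² - 1) x - a (a² - 1)`,
whose discriminant is `(a² - 1)(9a² - 1)`.
-/

namespace Matrix

variable {ι R : Type*}

def diagOffDiag [DecidableEq ι] (d e : R) : Matrix ι ι R :=
  of fun i j => if i = j then d else e

theorem diagOffDiag_eq_smul_one_add [DecidableEq ι] [Ring R] (d e : R) :
    (diagOffDiag d e : Matrix ι ι R) = (d - e) • (1 : Matrix ι ι R) + of fun _ _ => e := by
  ext i j
  by_cases h : i = j <;> simp [diagOffDiag, h]

theorem diagOffDiag_one_zero [DecidableEq ι] [Zero R] [One R] :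
    (diagOffDiag 1 0 : Matrix ι ι R) = 1 := by
  ext i j
  by_cases h : i = j <;> simp [diagOffDiag, one_apply, h]

theorem of_const_mul_of_const [Fintype ι] [Semiring R] (e₁ e₂ : R) :
    (of fun _ _ => e₁ : Matrix ι ι R) * of (fun _ _ => e₂) =
      of fun _ _ => Fintype.card ι * e₁ * e₂ := by
  ext i j
  simp [mul_apply, mul_assoc]

theorem diagOffDiag_mul [Fintype ι] [DecidableEq ι] [CommRing R] (d₁ e₁ d₂ e₂ : R) :
    (diagOffDiag d₁ e₁ : Matrix ι ι R) * diagOffDiag d₂ e₂ =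
      diagOffDiag (d₁ * d₂ + (Fintype.card ι - 1) * e₁ * e₂)
        (d₁ * e₂ + e₁ * d₂ + (Fintype.card ι - 2) * e₁ * e₂) := by
  rw [diagOffDiag_eq_smul_one_add d₁, diagOffDiag_eq_smul_one_add d₂, add_mul, mul_add, mul_add,
    of_const_mul_of_const, smul_mul_smul_comm, smul_mul_assoc, mul_smul_comm, one_mul, mul_one,
    one_mul, diagOffDiag_eq_smul_one_add]
  ext i j
  by_cases h : i = j <;> simp [h] <;> ring

theorem of_fin_three_eq_diagOffDiag (d e : R) :
    of ![![d, e, e], ![e, d, e], ![e, e, d]] = diagOffDiag d e := by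
  ext i j
  fin_cases i <;> fin_cases j <;> rfl

end Matrix

open Matrix

theorem ghzw_entries_relations {K : Type*} [Field K] (a s : K) (ha : 4 * a ≠ 0)
    (hs : s ^ 2 = (a ^ 2 - 1) * (9 * a ^ 2 - 1)) :
    let x := (a ^ 2 - 1 - s) / (4 * a)
    let y := (a ^ 2 - 1 + s) / (4 * a)
    a * a + 2 * (x * y) = 1 ∧ a * (x + y) + x * y = 0 := by
  intro x y
  have hx : 4 * a * x = a ^ 2 - 1 - s := mul_div_cancel₀ _ ha
  have hy : 4 * a * y = a ^ 2 - 1 + s := mul_div_cancel₀ _ ha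
  have hsum : 4 * a * (x + y) = 2 * (a ^ 2 - 1) := by linear_combination hx + hy
  have hprod : 2 * (x * y) = 1 - a * a := mul_left_cancel₀ (pow_ne_zero 2 ha) <| by
    linear_combination 2 * (4 * a * y * hx + (a ^ 2 - 1 - s) * hy - hs)
  refine ⟨by linear_combination hprod, mul_left_cancel₀ ha ?_⟩
  linear_combination a * hsum + 2 * a * hprod

theorem ghzw_matrix_inverse (a : ℝ) (ha : 1 < a) :
    let em : ℝ := (a ^ 2 - 1 - Real.sqrt ((a ^ 2 - 1) * (9 * a ^ 2 - 1))) / (4 * a)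
    let ep : ℝ := (a ^ 2 - 1 + Real.sqrt ((a ^ 2 - 1) * (9 * a ^ 2 - 1))) / (4 * a)
    let A : Matrix (Fin 3) (Fin 3) ℝ := Matrix.of ![![a, em, em], ![em, a, em], ![em, em, a]]
    let B : Matrix (Fin 3) (Fin 3) ℝ := Matrix.of ![![a, ep, ep], ![ep, a, ep], ![ep, ep, a]]
    IsUnit A ∧ A⁻¹ = B := by
  intro em ep A B
  have hD : 0 ≤ (a ^ 2 - 1) * (9 * a ^ 2 - 1) := mul_nonneg (by nlinarith) (by nlinarith)
  obtain ⟨hdiag, hoff⟩ :=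
    ghzw_entries_relations a _ (by positivity) (Real.sq_sqrt hD)
  have hAB : A * B = 1 := by
    simp only [A, B, of_fin_three_eq_diagOffDiag, diagOffDiag_mul, Fintype.card_fin]
    rw [← diagOffDiag_one_zero]
    congr 1
    · linear_combination hdiag
    · linear_combination hoff
  exact ⟨IsUnit.of_mul_eq_one B hAB, inv_eq_right_inv hAB⟩
end
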